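/- For ρ > 0, the 'power-loss' error η_D(ρ) = 1 + (2/π)·[ρ − (1+ρ²)·arctan(1/ρ)] satisfies η_D(ρ) = η(ρ) − η_ISI(ρ), where η(ρ) = 1 + (2/π)[(ρ/2)log(1+1/ρ²) − arctan(1/ρ)] and η_ISI(ρ) = (2/π)[ρ²arctan(1/ρ) + (ρ/2)log(1+1/ρ²) − ρ]. Moreover η_D(ρ) ≥ 0 for all ρ > 0 and η_D(ρ) → 0 as ρ → 0⁺. -/

import Mathlib

open Real Filter Topology

private lemma hasDerivAt_aux (x : ℝ) :
    HasDerivAt (fun t : ℝ => Real.arctan t - t / (1 + t ^ 2))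
      (2 * x ^ 2 / (1 + x ^ 2) ^ 2) x := by
  have hpos : (0:ℝ) < 1 + x ^ 2 := by positivity
  have h1 : HasDerivAt (fun t : ℝ => 1 + t ^ 2) (2 * x) x := by
    simpa using (hasDerivAt_pow 2 x).const_add 1
  have h2 : HasDerivAt (fun t : ℝ => t / (1 + t ^ 2))
      ((1 * (1 + x ^ 2) - x * (2 * x)) / (1 + x ^ 2) ^ 2) x :=
    (hasDerivAt_id x).div h1 hpos.ne'
  have h3 : HasDerivAt (fun t : ℝ => Real.arctan t - t / (1 + t ^ 2))
      (1 / (1 + x ^ 2) - (1 * (1 + x ^ 2) - x * (2 * x)) / (1 + x ^ 2) ^ 2) x :=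
    (Real.hasDerivAt_arctan x).sub h2
  convert h3 using 1
  field_simp
  ring

private lemma div_le_arctan {x : ℝ} (hx : 0 ≤ x) : x / (1 + x ^ 2) ≤ Real.arctan x := by
  have hmono : MonotoneOn (fun t : ℝ => Real.arctan t - t / (1 + t ^ 2)) (Set.Ici 0) := by
    apply monotoneOn_of_deriv_nonneg (convex_Ici 0)
    · exact fun t _ => ((hasDerivAt_aux t).continuousAt).continuousWithinAt
    · exact fun t _ => ((hasDerivAt_aux t).differentiableAt).differentiableWithinAt
    · intro t _
      rw [(hasDerivAt_aux t).deriv]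
      positivity
  have := hmono (Set.self_mem_Ici) (Set.mem_Ici.mpr hx) hx
  simp only [Real.arctan_zero, zero_div, sub_zero, zero_sub, neg_nonpos] at this
  linarith [this]

private lemma arctan_le_self {x : ℝ} (hx : 0 ≤ x) : Real.arctan x ≤ x := by
  have h := Real.le_tan (by simpa using Real.arctan_strictMono.monotone hx) (Real.arctan_lt_pi_div_two x)
  rwa [Real.tan_arctan] at h

/-- The power-loss error `η_D(ρ) = 1 + (2/π)[ρ − (1+ρ²)arctan(1/ρ)]` satisfies
`η_D = η − η_ISI`, is nonnegative for `ρ > 0`, and tends to `0` as `ρ → 0⁺`. -/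
theorem etaD_properties :
    (∀ ρ : ℝ, 0 < ρ →
      1 + (2 / π) * (ρ - (1 + ρ ^ 2) * Real.arctan (1 / ρ))
        = (1 + (2 / π) * ((ρ / 2) * Real.log (1 + 1 / ρ ^ 2) - Real.arctan (1 / ρ)))
          - (2 / π) * (ρ ^ 2 * Real.arctan (1 / ρ)
              + (ρ / 2) * Real.log (1 + 1 / ρ ^ 2) - ρ) ∧
      0 ≤ 1 + (2 / π) * (ρ - (1 + ρ ^ 2) * Real.arctan (1 / ρ))) ∧
    Tendsto (fun ρ : ℝ => 1 + (2 / π) * (ρ - (1 + ρ ^ 2) * Real.arctan (1 / ρ)))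
      (nhdsWithin 0 (Set.Ioi 0)) (nhds 0) := by
  have hπ : (0:ℝ) < π := Real.pi_pos
  constructor
  · intro ρ hρ
    constructor
    · ring
    · -- nonnegativity
      have key : 0 ≤ π + 2 * (ρ - (1 + ρ ^ 2) * Real.arctan (1 / ρ)) := by
        rcases le_total ρ 1 with h1 | h1
        · -- small ρ : use arctan(1/ρ) = π/2 - arctan ρ and arctan ρ ≥ ρ/(1+ρ²)
          rw [one_div, Real.arctan_inv_of_pos hρ]
          have harc : ρ / (1 + ρ ^ 2) ≤ Real.arctan ρ := div_le_arctan hρ.le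
          have hpos : (0:ℝ) < 1 + ρ ^ 2 := by positivity
          have hB : ρ ≤ (1 + ρ ^ 2) * Real.arctan ρ := by
            have := mul_le_mul_of_nonneg_left harc hpos.le
            rwa [mul_div_cancel₀ _ hpos.ne'] at this
          have hρ2 : ρ ^ 2 ≤ ρ := by nlinarith
          nlinarith [Real.pi_lt_d2, Real.pi_gt_three]
        · -- large ρ : use arctan(1/ρ) ≤ 1/ρ
          have h1ρ : (0:ℝ) ≤ 1 / ρ := by positivity
          have harc : Real.arctan (1 / ρ) ≤ 1 / ρ := arctan_le_self h1ρ
          have hpos : (0:ℝ) < 1 + ρ ^ 2 := by positivity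
          have hB : (1 + ρ ^ 2) * Real.arctan (1 / ρ) ≤ (1 + ρ ^ 2) * (1 / ρ) :=
            mul_le_mul_of_nonneg_left harc hpos.le
          have hinv : (1 + ρ ^ 2) * (1 / ρ) = 1 / ρ + ρ := by field_simp
          have hle : 1 / ρ ≤ 1 := by
            rw [div_le_one hρ]; exact h1
          nlinarith [Real.pi_gt_three]
      have heq : 1 + (2 / π) * (ρ - (1 + ρ ^ 2) * Real.arctan (1 / ρ))
          = (π + 2 * (ρ - (1 + ρ ^ 2) * Real.arctan (1 / ρ))) / π := by
        field_simp
      rw [heq]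
      exact div_nonneg key hπ.le
  · -- the limit as ρ → 0⁺
    have h1 : Tendsto (fun ρ : ℝ => 1 / ρ) (nhdsWithin 0 (Set.Ioi 0)) atTop := by
      simpa only [one_div] using tendsto_inv_nhdsGT_zero
    have h2 : Tendsto (fun ρ : ℝ => Real.arctan (1 / ρ)) (nhdsWithin 0 (Set.Ioi 0))
        (nhds (π / 2)) :=
      (Real.tendsto_arctan_atTop.mono_right nhdsWithin_le_nhds).comp h1
    have hid : Tendsto (fun ρ : ℝ => ρ) (nhdsWithin 0 (Set.Ioi 0)) (nhds 0) :=
      tendsto_id.mono_left nhdsWithin_le_nhds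
    have h3 : Tendsto (fun ρ : ℝ => 1 + (2 / π) * (ρ - (1 + ρ ^ 2) * Real.arctan (1 / ρ)))
        (nhdsWithin 0 (Set.Ioi 0))
        (nhds (1 + (2 / π) * (0 - (1 + 0 ^ 2) * (π / 2)))) := by
      apply tendsto_const_nhds.add
      apply Tendsto.const_mul
      exact hid.sub (((tendsto_const_nhds.add (hid.pow 2))).mul h2)
    have : (1 + (2 / π) * (0 - (1 + (0:ℝ) ^ 2) * (π / 2))) = 0 := by
      field_simp
      ring
    rwa [this] at h3
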